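/- On Kleene's first model K_1, for every ordinal α the relations ∼_{α+1} and ∼_{α+2} are many-one equivalent (as sets of pairs of codes for closed terms). -/

import Mathlib

/-! Both reductions prepend a fixed element `c`, sending the pair of codes of `s, t` to the
codes of `c·s, c·t`. For `∼_{α+1} ≤ ∼_{α+2}` take `c = K`: the extra argument of `K·s` is
ignored, so `K·s ∼_{α+2} K·t ↔ s ∼_{α+1} t`. For `∼_{α+2} ≤ ∼_{α+1}` take `c = f` with
`f·s·⟨a, b⟩ ≃ s·a·b`, given by the s-m-n theorem: since `⟨·,·⟩` is onto, `f` folds the two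
arguments tested by `∼_{α+2}` into one. -/

/-- A partial applicative structure: a set with a partial binary application. -/
structure PAS where
  carrier : Type
  app : carrier → carrier → Part carrier

namespace PAS

/-- Closed terms over a partial applicative structure. -/
inductive Term (A : PAS) : Type
  | const : A.carrier → Term A
  | app : Term A → Term A → Term A

/-- Evaluation of a closed term (a partial element of the carrier). -/
def Term.eval {A : PAS} : Term A → Part A.carrier
  | .const a => Part.some a
  | .app s t => do
      let x ← Term.eval s
      let y ← Term.eval t
      A.app x y

/-- Kleene equality of closed terms: both undefined, or both defined and equal. -/
def KEq {A : PAS} (s t : Term A) : Prop := s.eval = t.eval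

/-- The transfinite hierarchy of extensionality relations `∼_α` on closed terms:
`s ∼_0 t` iff `s ≃ t`; `s ∼_{α+1} t` iff `∀ x, s·x ∼_α t·x`; and at limits,
`s ∼_α t` iff `s ∼_β t` for some `β < α`. -/
noncomputable def sim (A : PAS) (α : Ordinal) : Term A → Term A → Prop :=
  Ordinal.limitRecOn α
    (fun s t => KEq s t)
    (fun _ ih s t => ∀ x : A.carrier, ih (s.app (.const x)) (t.app (.const x)))
    (fun β _ ih s t => ∃ γ, ∃ h : γ < β, ih γ h s t)

end PAS

/-- A partial combinatory algebra: a partial applicative structure with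
combinators `K` and `S` such that `K·a·b = a`, `S·a·b` is defined, and
`S·a·b·c ≃ a·c·(b·c)`. -/
structure PCA extends PAS where
  K : carrier
  S : carrier
  K_spec : ∀ a b : carrier, (app K a).bind (fun x => app x b) = Part.some a
  S_defined : ∀ a b : carrier, ((app S a).bind (fun x => app x b)).Dom
  S_spec : ∀ a b c : carrier,
    ((app S a).bind (fun x => app x b)).bind (fun x => app x c)
      = (app a c).bind (fun u => (app b c).bind (fun v => app u v))

/-- Kleene's first model: the pca on ω with application n·m = Φ_n(m). -/
def K1 : PAS :=
  ⟨ℕ, fun n m => (Denumerable.ofNat Nat.Partrec.Code n).eval m⟩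

/-- Iterated application of a term to a finite list of elements: t·σ(0)·…·σ(k-1). -/
def PAS.Term.appList {A : PAS} (t : PAS.Term A) (σ : List A.carrier) : PAS.Term A :=
  σ.foldl (fun s x => s.app (.const x)) t

/-- An element is hereditarily total if every iterated application to elements is defined. -/
def PAS.HeredTotal (A : PAS) (a : A.carrier) : Prop :=
  ∀ σ : List A.carrier, ((PAS.Term.const a).appList σ).eval.Dom

/-- A coding of the closed terms over K₁ by natural numbers. -/
def termOfNat : ℕ → K1.Term
  | 0 => .const (0 : ℕ)
  | (n + 1) =>
    if n.unpair.1 = 0 then .const (n.unpair.2 : ℕ)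
    else .app (termOfNat n.unpair.2.unpair.1) (termOfNat n.unpair.2.unpair.2)
  decreasing_by
    all_goals
      have h1 : n.unpair.2 ≤ n := Nat.unpair_right_le n
      have h2 : n.unpair.2.unpair.1 ≤ n.unpair.2 := Nat.unpair_left_le _
      have h3 : n.unpair.2.unpair.2 ≤ n.unpair.2 := Nat.unpair_right_le _
      omega

namespace PAS

variable {A : PAS}

@[simp]
theorem Term.eval_const (a : A.carrier) : (Term.const a).eval = Part.some a := rfl

theorem Term.eval_app (s t : Term A) :
    (s.app t).eval = s.eval.bind fun x => t.eval.bind fun y => A.app x y := rfl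

theorem sim_zero (s t : Term A) : A.sim 0 s t ↔ KEq s t := by
  rw [sim, Ordinal.limitRecOn_zero]

theorem sim_add_one (α : Ordinal) (s t : Term A) :
    A.sim (α + 1) s t ↔ ∀ x, A.sim α (s.app (.const x)) (t.app (.const x)) := by
  rw [sim, Ordinal.limitRecOn_add_one]
  rfl

theorem sim_of_isSuccLimit {α : Ordinal} (hα : Order.IsSuccLimit α) (s t : Term A) :
    A.sim α s t ↔ ∃ β < α, A.sim β s t := by
  rw [sim, Ordinal.limitRecOn_limit _ _ _ _ hα]
  simp only [exists_prop]
  rfl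

theorem sim_add_two (α : Ordinal) (s t : Term A) :
    A.sim (α + 2) s t ↔
      ∀ x y, A.sim α ((s.app (.const x)).app (.const y)) ((t.app (.const x)).app (.const y)) := by
  rw [← one_add_one_eq_two, ← add_assoc, sim_add_one]
  simp only [sim_add_one]

theorem sim_congr (α : Ordinal) {s s' t t' : Term A} (hs : s.eval = s'.eval)
    (ht : t.eval = t'.eval) : A.sim α s t ↔ A.sim α s' t' := by
  induction α using Ordinal.limitRecOn generalizing s s' t t' with
  | zero => rw [sim_zero, sim_zero, KEq, KEq, hs, ht]
  | add_one β ih =>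
    simp only [sim_add_one]
    exact forall_congr' fun x =>
      ih (by simp only [Term.eval_app, hs]) (by simp only [Term.eval_app, ht])
  | limit β hβ ih =>
    simp only [sim_of_isSuccLimit hβ]
    exact exists_congr fun γ => and_congr_right fun hγ => ih γ hγ hs ht

def IsKComb (A : PAS) (k : A.carrier) : Prop :=
  ∀ a b, (A.app k a).bind (fun u => A.app u b) = Part.some a

theorem eval_app_app_of_isKComb {k : A.carrier} (hk : A.IsKComb k) (s : Term A) (x : A.carrier) :
    (((Term.const k).app s).app (.const x)).eval = s.eval := by
  unfold IsKComb at hk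
  simp only [Term.eval_app, Term.eval_const, Part.bind_some, Part.bind_assoc, hk,
    Part.bind_some_right]

theorem sim_add_one_iff_sim_add_two_of_isKComb {k : A.carrier} (hk : A.IsKComb k) (α : Ordinal)
    (s t : Term A) :
    A.sim (α + 1) s t ↔ A.sim (α + 2) ((Term.const k).app s) ((Term.const k).app t) := by
  have hsim (x : A.carrier) := sim_congr (α + 1) (eval_app_app_of_isKComb hk s x).symm
    (eval_app_app_of_isKComb hk t x).symm
  rw [← one_add_one_eq_two, ← add_assoc, sim_add_one (α + 1)]
  exact ⟨fun h x => (hsim x).1 h, fun h => (hsim k).2 (h k)⟩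

theorem sim_add_two_iff_sim_add_one_of_uncurry {f : A.carrier}
    {pair : A.carrier → A.carrier → A.carrier} (hpair : ∀ n, ∃ a b, pair a b = n)
    (hf : ∀ v a b,
      (A.app f v).bind (fun u => A.app u (pair a b)) = (A.app v a).bind (fun u => A.app u b))
    (α : Ordinal) (s t : Term A) :
    A.sim (α + 2) s t ↔ A.sim (α + 1) ((Term.const f).app s) ((Term.const f).app t) := by
  have heval (r : Term A) (a b : A.carrier) :
      (((Term.const f).app r).app (.const (pair a b))).eval =
        ((r.app (.const a)).app (.const b)).eval := by
    simp only [Term.eval_app, Term.eval_const, Part.bind_some, Part.bind_assoc, hf]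
  have hsim (a b : A.carrier) := sim_congr α (heval s a b) (heval t a b)
  rw [sim_add_two, sim_add_one]
  refine ⟨fun h n => ?_, fun h a b => (hsim a b).1 (h (pair a b))⟩
  obtain ⟨a, b, rfl⟩ := hpair n
  exact (hsim a b).2 (h a b)

end PAS

namespace K1

open Nat.Partrec (Code)
open Encodable

theorem app_encode (c : Code) (n : ℕ) : K1.app (encode c) n = c.eval n := by
  simp only [K1, Denumerable.ofNat_encode]

theorem exists_index {f : ℕ →. ℕ} (hf : Partrec f) : ∃ e : ℕ, ∀ n : ℕ, K1.app e n = f n := by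
  obtain ⟨c, rfl⟩ := Code.exists_code.1 (Partrec.nat_iff.1 hf)
  exact ⟨encode c, app_encode c⟩

/-- The s-m-n theorem, read in `K₁`: every partial computable function of two arguments is
represented by an element `e`, applied one argument at a time. -/
theorem exists_index₂ {g : ℕ → ℕ →. ℕ} (hg : Partrec₂ g) :
    ∃ e : ℕ, ∀ a b : ℕ, (K1.app e a).bind (fun u => K1.app u b) = g a b := by
  obtain ⟨c, hc⟩ := Code.exists_code.1 (Partrec.nat_iff.1 (hg.comp
    (Computable.fst.comp Computable.unpair) (Computable.snd.comp Computable.unpair)))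
  have hcurry : Computable fun a => encode (c.curry a) :=
    Computable.encode.comp ((Code.primrec₂_curry.comp (Primrec.const c) Primrec.id).to_comp)
  obtain ⟨e, he⟩ := exists_index hcurry.partrec
  refine ⟨e, fun a b => ?_⟩
  rw [he, PFun.coe_val]
  refine (Part.bind_some _ _).trans ?_
  rw [app_encode, Code.eval_curry, hc]
  simp only [Nat.unpair_pair]
  rfl

theorem exists_isKComb : ∃ k : ℕ, K1.IsKComb k := by
  obtain ⟨k, hk⟩ :=
    exists_index₂ (g := fun a _ => Part.some a) (Computable₂.partrec₂ Computable.fst)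
  exact ⟨k, hk⟩

theorem exists_uncurry :
    ∃ f : ℕ, ∀ v a b : ℕ, (K1.app f v).bind (fun u => K1.app u (Nat.pair a b)) =
      (K1.app v a).bind (fun u => K1.app u b) := by
  have happ : Partrec₂ fun v n : ℕ => (Denumerable.ofNat Code v).eval n :=
    Code.eval_part.comp ((Computable.ofNat Code).comp Computable.fst) Computable.snd
  have hg : Partrec₂ fun v n : ℕ => ((Denumerable.ofNat Code v).eval n.unpair.1).bind
      fun u => (Denumerable.ofNat Code u).eval n.unpair.2 :=
    (happ.comp Computable.fst (Computable.fst.comp (Computable.unpair.comp Computable.snd))).bind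
      (happ.comp Computable.snd
        (Computable.snd.comp (Computable.unpair.comp (Computable.snd.comp Computable.fst)))).to₂
  obtain ⟨f, hf⟩ := exists_index₂ hg
  refine ⟨f, fun v a b => (hf v (Nat.pair a b)).trans ?_⟩
  simp only [Nat.unpair_pair]
  rfl

end K1

theorem termOfNat_const (c : ℕ) : termOfNat (Nat.pair 0 c + 1) = .const c := by
  rw [termOfNat]
  simp

theorem termOfNat_app (a b : ℕ) :
    termOfNat (Nat.pair 1 (Nat.pair a b) + 1) = .app (termOfNat a) (termOfNat b) := by
  rw [termOfNat]
  simp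

theorem manyOneReducible_termOfNat_of_app_const (c : ℕ) {R S : K1.Term → K1.Term → Prop}
    (h : ∀ s t, R s t ↔ S ((PAS.Term.const c).app s) ((PAS.Term.const c).app t)) :
    ManyOneReducible (fun p : ℕ × ℕ => R (termOfNat p.1) (termOfNat p.2))
      (fun p : ℕ × ℕ => S (termOfNat p.1) (termOfNat p.2)) := by
  have hcode : Primrec fun n => Nat.pair 1 (Nat.pair (Nat.pair 0 c + 1) n) + 1 :=
    Primrec.succ.comp (Primrec₂.natPair.comp (Primrec.const 1)
      (Primrec₂.natPair.comp (Primrec.const _) Primrec.id))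
  refine ⟨_, ((hcode.comp Primrec.fst).pair (hcode.comp Primrec.snd)).to_comp, fun p => ?_⟩
  simp only [termOfNat_app, termOfNat_const]
  exact h _ _

/-- On K₁, for every ordinal α the relations ∼_{α+1} and ∼_{α+2},
as sets of pairs of codes of closed terms, are many-one equivalent. -/
theorem stmt13 (α : Ordinal) :
    ManyOneReducible (fun p : ℕ × ℕ => K1.sim (α + 1) (termOfNat p.1) (termOfNat p.2))
      (fun p : ℕ × ℕ => K1.sim (α + 2) (termOfNat p.1) (termOfNat p.2)) ∧
    ManyOneReducible (fun p : ℕ × ℕ => K1.sim (α + 2) (termOfNat p.1) (termOfNat p.2))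
      (fun p : ℕ × ℕ => K1.sim (α + 1) (termOfNat p.1) (termOfNat p.2)) := by
  obtain ⟨k, hk⟩ := K1.exists_isKComb
  obtain ⟨f, hf⟩ := K1.exists_uncurry
  have hpair (n : ℕ) : ∃ a b, Nat.pair a b = n := ⟨_, _, Nat.pair_unpair n⟩
  exact ⟨manyOneReducible_termOfNat_of_app_const k
      (PAS.sim_add_one_iff_sim_add_two_of_isKComb hk α),
    manyOneReducible_termOfNat_of_app_const f
      (PAS.sim_add_two_iff_sim_add_one_of_uncurry hpair hf α)⟩
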